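/- Let α ∈ (0,1), β > 0 and ε > 0 with β + ε < α, and let δ ∈ (0, α − β − ε). There exists a constant C = C(α, β, ε, δ) such that for every integer n ≥ 1, every ξ ∈ L²(𝕋²), and every family (a_k)_{k ∈ ℤ²∖{0}} of unit vectors in ℝ² with a_k · k = 0 for all k: Σ_{k ∈ ℤ²∖{0}, |k| > n} |k|^{−2α} Σ_{l ∈ ℤ²} (1+|l|²)^{β+ε−2} |2π l·a_k|² |ξ̂(l−k)|² ≤ C n^{−2δ} ‖ξ‖²_{L²}. (The inner sum over l equals ‖div(a_k e_k ξ)‖²_{H^{β+ε−2}}, i.e. the squared H^{β+ε−2} norm of σ_k·∇ξ for σ_k = a_k e_k.) -/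

import Mathlib

open MeasureTheory Filter
open scoped ENNReal NNReal

noncomputable section

namespace GaleatiLuo

/-- The unit box `[0,1)^d ⊆ ℝ^d`, a fundamental domain for the torus `𝕋^d = ℝ^d/ℤ^d`. -/
def box (d : ℕ) : Set (Fin d → ℝ) := Set.univ.pi fun _ => Set.Ico (0 : ℝ) 1

/-- Lebesgue measure restricted to the fundamental domain: the measure of the torus. -/
def μT (d : ℕ) : Measure (Fin d → ℝ) := volume.restrict (box d)

/-- `ℤ^d`-periodicity of a scalar function on `ℝ^d`. -/
def ZPeriodic {d : ℕ} (f : (Fin d → ℝ) → ℝ) : Prop :=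
  ∀ (x : Fin d → ℝ) (k : Fin d → ℤ), f (x + fun i => (k i : ℝ)) = f x

/-- `ℤ^d`-periodicity of a vector field on `ℝ^d`. -/
def ZPeriodicV {d : ℕ} (h : (Fin d → ℝ) → Fin d → ℝ) : Prop :=
  ∀ (x : Fin d → ℝ) (k : Fin d → ℤ), h (x + fun i => (k i : ℝ)) = h x

/-- Euclidean norm of a lattice point `k ∈ ℤ^d`. -/
def znorm {d : ℕ} (k : Fin d → ℤ) : ℝ := Real.sqrt (∑ i, ((k i : ℝ)) ^ 2)

/-- The `k`-th Fourier coefficient `f̂(k) = ∫_{[0,1)^d} f(x) e^{-2πik·x} dx`. -/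
def fc {d : ℕ} (f : (Fin d → ℝ) → ℝ) (k : Fin d → ℤ) : ℂ :=
  ∫ x, (f x : ℂ) *
    Complex.exp (-(2 * (Real.pi : ℂ) * Complex.I) * ((∑ i, (k i : ℝ) * x i : ℝ) : ℂ)) ∂(μT d)

/-- Squared Sobolev norm `‖f‖_{H^s}² = Σ_k (1+|k|²)^s |f̂(k)|²` (valued in `ℝ≥0∞`). -/
def sobNormSq {d : ℕ} (s : ℝ) (f : (Fin d → ℝ) → ℝ) : ℝ≥0∞ :=
  ∑' k : Fin d → ℤ, ENNReal.ofReal ((1 + znorm k ^ 2) ^ s) * (‖fc f k‖₊ : ℝ≥0∞) ^ 2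

/-- Sobolev norm `‖f‖_{H^s}`. -/
def sobNorm {d : ℕ} (s : ℝ) (f : (Fin d → ℝ) → ℝ) : ℝ≥0∞ := sobNormSq s f ^ (1 / 2 : ℝ)

/-- Squared `H^s` norm of a vector field (sum over components). -/
def sobNormSqV {d : ℕ} (s : ℝ) (h : (Fin d → ℝ) → Fin d → ℝ) : ℝ≥0∞ :=
  ∑ i, sobNormSq s (fun x => h x i)

/-- `L^p(𝕋^d)` norm. -/
def spLp {d : ℕ} (p : ℝ≥0∞) (f : (Fin d → ℝ) → ℝ) : ℝ≥0∞ := eLpNorm f p (μT d)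

/-- `L^p(𝕋^d)` norm of a vector field. -/
def spLpV {d : ℕ} (p : ℝ≥0∞) (h : (Fin d → ℝ) → Fin d → ℝ) : ℝ≥0∞ := eLpNorm h p (μT d)

/-- Mixed norm `‖u‖_{L^q_t L^p_x}` on `[0,T]` (essential supremum when `q = ∞`). -/
def LqLp {d : ℕ} (T : ℝ) (q p : ℝ≥0∞) (u : ℝ → (Fin d → ℝ) → ℝ) : ℝ≥0∞ :=
  if q = ∞ then essSup (fun t => spLp p (u t)) (volume.restrict (Set.Icc (0:ℝ) T))
  else (∫⁻ t in Set.Icc (0:ℝ) T, spLp p (u t) ^ q.toReal) ^ (1 / q.toReal)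

/-- Mixed norm `‖u‖_{L^q_t L^p_x}` for vector fields. -/
def LqLpV {d : ℕ} (T : ℝ) (q p : ℝ≥0∞) (u : ℝ → (Fin d → ℝ) → Fin d → ℝ) : ℝ≥0∞ :=
  if q = ∞ then essSup (fun t => spLpV p (u t)) (volume.restrict (Set.Icc (0:ℝ) T))
  else (∫⁻ t in Set.Icc (0:ℝ) T, spLpV p (u t) ^ q.toReal) ^ (1 / q.toReal)

/-- `i`-th partial derivative. -/
def pd {d : ℕ} (i : Fin d) (φ : (Fin d → ℝ) → ℝ) : (Fin d → ℝ) → ℝ :=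
  fun x => fderiv ℝ φ x (Pi.single i 1)

/-- Laplacian. -/
def lap {d : ℕ} (φ : (Fin d → ℝ) → ℝ) : (Fin d → ℝ) → ℝ :=
  fun x => ∑ i, pd i (pd i φ) x

/-- `L²(𝕋^d)` pairing `⟨f, g⟩ = ∫_{𝕋^d} f g`. -/
def pairT {d : ℕ} (f g : (Fin d → ℝ) → ℝ) : ℝ := ∫ x, f x * g x ∂(μT d)

/-- Smooth periodic test function. -/
def Test {d : ℕ} (φ : (Fin d → ℝ) → ℝ) : Prop := ContDiff ℝ (⊤ : ℕ∞) φ ∧ ZPeriodic φ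

/-- `D` is the distributional divergence of the vector field `h` on the torus. -/
def IsWeakDiv {d : ℕ} (h : (Fin d → ℝ) → Fin d → ℝ) (D : (Fin d → ℝ) → ℝ) : Prop :=
  ∀ φ, Test φ →
    ∫ x, (∑ i, h x i * pd i φ x) ∂(μT d) = - ∫ x, D x * φ x ∂(μT d)

/-- `g` is the weak spatial gradient of `f` on the torus. -/
def HasWeakGrad {d : ℕ} (f : (Fin d → ℝ) → ℝ) (g : (Fin d → ℝ) → Fin d → ℝ) : Prop :=
  ∀ φ, Test φ → ∀ i,
    ∫ x, f x * pd i φ x ∂(μT d) = - ∫ x, g x i * φ x ∂(μT d)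

/-- Continuity in time with values in `L^p(𝕋^d)`. -/
def ContLp {d : ℕ} (T : ℝ) (p : ℝ≥0∞) (f : ℝ → (Fin d → ℝ) → ℝ) : Prop :=
  ∀ t ∈ Set.Icc (0:ℝ) T, ∀ ε : ℝ, 0 < ε → ∃ δ > (0:ℝ), ∀ s ∈ Set.Icc (0:ℝ) T,
    |s - t| < δ → spLp p (fun x => f s x - f t x) < ENNReal.ofReal ε

/-- Continuity in time with values in `H^{s₀}(𝕋^d)`. -/
def ContSob {d : ℕ} (T s₀ : ℝ) (f : ℝ → (Fin d → ℝ) → ℝ) : Prop :=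
  ∀ t ∈ Set.Icc (0:ℝ) T, ∀ ε : ℝ, 0 < ε → ∃ δ > (0:ℝ), ∀ s ∈ Set.Icc (0:ℝ) T,
    |s - t| < δ → sobNorm s₀ (fun x => f s x - f t x) < ENNReal.ofReal ε

/-- `C⁰_t H^s` norm: `sup_{t∈[0,T]} ‖f_t‖_{H^s}`. -/
def supSob {d : ℕ} (T s : ℝ) (f : ℝ → (Fin d → ℝ) → ℝ) : ℝ≥0∞ :=
  ⨆ t ∈ Set.Icc (0:ℝ) T, sobNorm s (f t)

/-- `sup_{t∈[0,T]} ‖f_t‖_{L^p}`. -/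
def supLp {d : ℕ} (T : ℝ) (p : ℝ≥0∞) (f : ℝ → (Fin d → ℝ) → ℝ) : ℝ≥0∞ :=
  ⨆ t ∈ Set.Icc (0:ℝ) T, spLp p (f t)

/-- `L²_t H¹_x` norm. -/
def L2H1 {d : ℕ} (T : ℝ) (f : ℝ → (Fin d → ℝ) → ℝ) : ℝ≥0∞ :=
  (∫⁻ t in Set.Icc (0:ℝ) T, sobNormSq 1 (f t)) ^ (1 / 2 : ℝ)

/-- A measurable periodic path, bounded in `L^∞([0,T]×𝕋^d)`. -/
def BddClass {d : ℕ} (T : ℝ) (f : ℝ → (Fin d → ℝ) → ℝ) : Prop :=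
  Measurable (Function.uncurry f) ∧ (∀ t, ZPeriodic (f t)) ∧ LqLp T ∞ ∞ f < ∞

/-- Membership in `L^∞_t L²_x ∩ L²_t H¹_x` (with a weak spatial gradient). -/
def SolClassL2 {d : ℕ} (T : ℝ) (f : ℝ → (Fin d → ℝ) → ℝ) : Prop :=
  Measurable (Function.uncurry f) ∧ (∀ t, ZPeriodic (f t)) ∧ supLp T 2 f < ∞ ∧
  ∃ g : ℝ → (Fin d → ℝ) → Fin d → ℝ,
    (∀ t ∈ Set.Icc (0:ℝ) T, HasWeakGrad (f t) (g t)) ∧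
    (∫⁻ t in Set.Icc (0:ℝ) T, (spLp 2 (f t) ^ 2 + spLpV 2 (g t) ^ 2)) < ∞

end GaleatiLuo
namespace GaleatiLuo

lemma znorm_nonneg {d : ℕ} (k : Fin d → ℤ) : 0 ≤ znorm k := Real.sqrt_nonneg _

lemma znorm_sq {d : ℕ} (k : Fin d → ℤ) : znorm k ^ 2 = ∑ i, ((k i : ℝ)) ^ 2 :=
  Real.sq_sqrt (Finset.sum_nonneg fun _ _ => sq_nonneg _)

lemma one_le_znorm {d : ℕ} {k : Fin d → ℤ} (hk : k ≠ 0) : 1 ≤ znorm k := by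
  obtain ⟨i, hi⟩ : ∃ i, k i ≠ 0 := by
    by_contra h; push_neg at h; exact hk (funext h)
  have h0 : (1:ℝ) ≤ |(k i : ℝ)| := by
    rw [← Int.cast_abs]; exact_mod_cast Int.one_le_abs hi
  have h1 : (1:ℝ) ≤ ((k i : ℝ))^2 := by nlinarith [sq_abs ((k i : ℝ))]
  have h2 : (1:ℝ) ≤ ∑ j, ((k j:ℝ))^2 :=
    le_trans h1 (Finset.single_le_sum (f := fun j => ((k j:ℝ))^2) (fun j _ => sq_nonneg _) (Finset.mem_univ i))
  calc (1:ℝ) = Real.sqrt 1 := Real.sqrt_one.symm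
  _ ≤ znorm k := Real.sqrt_le_sqrt h2

lemma znorm_pos {d : ℕ} {k : Fin d → ℤ} (hk : k ≠ 0) : 0 < znorm k :=
  lt_of_lt_of_le one_pos (one_le_znorm hk)

/-- triangle inequality -/
lemma znorm_triangle {d : ℕ} (x y : Fin d → ℤ) : znorm (x + y) ≤ znorm x + znorm y := by
  have hcs : ∑ i, ((x i : ℝ)) * ((y i : ℝ)) ≤ znorm x * znorm y :=
    Real.sum_mul_le_sqrt_mul_sqrt _ _ _
  have hexp : ∑ i, (((x + y) i : ℝ))^2 = (∑ i, ((x i:ℝ))^2) + 2 * (∑ i, (x i:ℝ) * (y i:ℝ)) + ∑ i, ((y i:ℝ))^2 := by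
    rw [Finset.mul_sum, ← Finset.sum_add_distrib, ← Finset.sum_add_distrib]
    apply Finset.sum_congr rfl
    intro i _
    simp only [Pi.add_apply, Int.cast_add]
    ring
  have hx2 : (∑ i, ((x i:ℝ))^2) = znorm x ^ 2 := (znorm_sq x).symm
  have hy2 : (∑ i, ((y i:ℝ))^2) = znorm y ^ 2 := (znorm_sq y).symm
  have : ∑ i, (((x + y) i : ℝ))^2 ≤ (znorm x + znorm y)^2 := by
    rw [hexp, hx2, hy2]; nlinarith
  calc znorm (x + y) = Real.sqrt (∑ i, (((x+y) i : ℝ))^2) := rfl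
  _ ≤ Real.sqrt ((znorm x + znorm y)^2) := Real.sqrt_le_sqrt this
  _ = znorm x + znorm y := Real.sqrt_sq (add_nonneg (znorm_nonneg x) (znorm_nonneg y))

/-- 1-d summability -/
lemma sum1d {q : ℝ} (hq : 1/2 < q) :
    (∑' t : ℤ, ENNReal.ofReal ((1 + (t:ℝ)^2) ^ (-q))) ≠ ∞ := by
  have hsum : Summable fun t : ℤ => |(t:ℝ)| ^ (-(2*q)) :=
    Real.summable_abs_int_rpow (by linarith)
  have hb : ∀ t : ℤ, ENNReal.ofReal ((1 + (t:ℝ)^2) ^ (-q)) ≤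
      (if t = 0 then 1 else 0) + ENNReal.ofReal (|(t:ℝ)| ^ (-(2*q))) := by
    intro t
    by_cases ht : t = 0
    · subst ht; simp
    · have h0 : (0:ℝ) < ((t:ℝ))^2 := by
        have : (t:ℝ) ≠ 0 := Int.cast_ne_zero.mpr ht
        positivity
      have h1 : ((t:ℝ)^2 : ℝ) ≤ 1 + (t:ℝ)^2 := by linarith
      have h2 : (1 + (t:ℝ)^2) ^ (-q) ≤ ((t:ℝ)^2) ^ (-q) :=
        Real.rpow_le_rpow_of_nonpos h0 h1 (by linarith)
      have h3 : ((t:ℝ)^2) ^ (-q) = |(t:ℝ)| ^ (-(2*q)) := by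
        rw [← sq_abs, ← Real.rpow_natCast |(t:ℝ)| 2, ← Real.rpow_mul (abs_nonneg _)]
        norm_num
      simp only [ht, if_false, zero_add]
      exact ENNReal.ofReal_le_ofReal (h3 ▸ h2)
  have key : (∑' t : ℤ, ENNReal.ofReal ((1 + (t:ℝ)^2) ^ (-q))) < ∞ := calc
    (∑' t : ℤ, ENNReal.ofReal ((1 + (t:ℝ)^2) ^ (-q)))
      ≤ ∑' t : ℤ, ((if t = 0 then 1 else 0) + ENNReal.ofReal (|(t:ℝ)| ^ (-(2*q)))) :=
        ENNReal.tsum_le_tsum hb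
    _ = (∑' t : ℤ, (if t = 0 then (1:ℝ≥0∞) else 0)) + ∑' t : ℤ, ENNReal.ofReal (|(t:ℝ)| ^ (-(2*q))) :=
        ENNReal.tsum_add
    _ < ∞ := by
      have e1 : (∑' t : ℤ, (if t = 0 then (1:ℝ≥0∞) else 0)) = 1 := by
        rw [tsum_eq_single 0] <;> simp
      have e2 : (∑' t : ℤ, ENNReal.ofReal (|(t:ℝ)| ^ (-(2*q)))) =
          ENNReal.ofReal (∑' t : ℤ, |(t:ℝ)| ^ (-(2*q))) :=
        (ENNReal.ofReal_tsum_of_nonneg (fun t => Real.rpow_nonneg (abs_nonneg _) _) hsum).symm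
      rw [e1, e2]
      exact ENNReal.add_lt_top.mpr ⟨ENNReal.one_lt_top, ENNReal.ofReal_lt_top⟩
  exact key.ne

/-- 2-d summability: `Σ_j (1+|j|²)^{-c/2} < ∞` for `c > 2`. -/
lemma sumZ2 {c : ℝ} (hc : 2 < c) :
    (∑' j : Fin 2 → ℤ, ENNReal.ofReal ((1 + znorm j ^ 2) ^ (-(c/2)))) ≠ ∞ := by
  set g : ℤ → ℝ≥0∞ := fun t => ENNReal.ofReal ((1 + (t:ℝ)^2) ^ (-(c/4))) with hg
  have hb : ∀ j : Fin 2 → ℤ, ENNReal.ofReal ((1 + znorm j ^ 2) ^ (-(c/2))) ≤ g (j 0) * g (j 1) := by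
    intro j
    set P1 : ℝ := 1 + ((j 0 : ℝ))^2 with hP1
    set P2 : ℝ := 1 + ((j 1 : ℝ))^2 with hP2
    have hP1pos : 0 < P1 := by positivity
    have hP2pos : 0 < P2 := by positivity
    have hzs : znorm j ^ 2 = ((j 0:ℝ))^2 + ((j 1:ℝ))^2 := by
      rw [znorm_sq, Fin.sum_univ_two]
    have hsq : P1 * P2 ≤ (1 + znorm j ^ 2)^2 := by
      rw [hzs]; nlinarith [sq_nonneg ((j 0:ℝ)), sq_nonneg ((j 1:ℝ)), sq_nonneg (((j 0:ℝ))^2 + ((j 1:ℝ))^2)]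
    have h1 : (1 + znorm j ^ 2) ^ (-(c/2)) = ((1 + znorm j ^ 2)^2) ^ (-(c/4)) := by
      have hpos : (0:ℝ) ≤ 1 + znorm j ^ 2 := by positivity
      rw [← Real.rpow_natCast (1 + znorm j ^ 2) 2, ← Real.rpow_mul hpos]
      norm_num
      congr 1
      ring
    have h2 : ((1 + znorm j ^ 2)^2) ^ (-(c/4)) ≤ (P1 * P2) ^ (-(c/4)) :=
      Real.rpow_le_rpow_of_nonpos (by positivity) hsq (by linarith)
    have h3 : (P1 * P2) ^ (-(c/4)) = P1 ^ (-(c/4)) * P2 ^ (-(c/4)) :=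
      Real.mul_rpow hP1pos.le hP2pos.le
    calc ENNReal.ofReal ((1 + znorm j ^ 2) ^ (-(c/2)))
        ≤ ENNReal.ofReal (P1 ^ (-(c/4)) * P2 ^ (-(c/4))) := by
          apply ENNReal.ofReal_le_ofReal; rw [h1]; rw [h3] at h2; exact h2
      _ = g (j 0) * g (j 1) := by
          rw [ENNReal.ofReal_mul (Real.rpow_nonneg hP1pos.le _)]
  have hgsum : (∑' t : ℤ, g t) ≠ ∞ := sum1d (by linarith)
  have hsplit : (∑' j : Fin 2 → ℤ, g (j 0) * g (j 1)) = (∑' t : ℤ, g t) * (∑' t : ℤ, g t) := by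
    rw [← (piFinTwoEquiv (fun _ => ℤ)).symm.tsum_eq (fun j => g (j 0) * g (j 1))]
    simp only [piFinTwoEquiv_symm_apply, Fin.cons_zero, Fin.cons_one]
    rw [ENNReal.tsum_prod (f := fun a b => g a * g b)]
    calc ∑' (a : ℤ) (b : ℤ), g a * g b = ∑' (a : ℤ), g a * ∑' (b : ℤ), g b := by
          congr 1; funext a; exact ENNReal.tsum_mul_left
      _ = (∑' (t : ℤ), g t) * ∑' (t : ℤ), g t := ENNReal.tsum_mul_right
  refine ne_top_of_le_ne_top ?_ (ENNReal.tsum_le_tsum hb)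
  rw [hsplit]
  exact ENNReal.mul_ne_top hgsum hgsum

/-- Summability of `Σ_{k≠0} |k|^{-c}` for `c > 2`. -/
lemma sumZ2' {c : ℝ} (hc : 2 < c) :
    (∑' k : Fin 2 → ℤ, (if k ≠ 0 then ENNReal.ofReal (znorm k ^ (-c)) else 0)) ≠ ∞ := by
  have hb : ∀ k : Fin 2 → ℤ, (if k ≠ 0 then ENNReal.ofReal (znorm k ^ (-c)) else 0) ≤
      ENNReal.ofReal ((2:ℝ) ^ (c/2)) * ENNReal.ofReal ((1 + znorm k ^ 2) ^ (-(c/2))) := by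
    intro k
    by_cases hk : k = 0
    · simp [hk]
    · simp only [hk, ne_eq, not_false_eq_true, if_true]
      rw [← ENNReal.ofReal_mul (by positivity)]
      apply ENNReal.ofReal_le_ofReal
      have h1 : 1 ≤ znorm k := one_le_znorm hk
      have hz : 0 < znorm k := by linarith
      have key : 1 + znorm k ^ 2 ≤ 2 * znorm k ^ 2 := by nlinarith
      have e1 : znorm k ^ (-c) = (znorm k ^ 2 : ℝ) ^ (-(c/2)) := by
        rw [← Real.rpow_natCast (znorm k) 2, ← Real.rpow_mul hz.le]
        norm_num
        congr 1
        ring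
      have e2 : (znorm k ^ 2 : ℝ) ^ (-(c/2)) ≤ ((1 + znorm k ^ 2)/2 : ℝ) ^ (-(c/2)) := by
        apply Real.rpow_le_rpow_of_nonpos (by positivity) (by linarith) (by linarith)
      have e3 : ((1 + znorm k ^ 2)/2 : ℝ) ^ (-(c/2)) = (2:ℝ)^(c/2) * (1 + znorm k ^ 2) ^ (-(c/2)) := by
        rw [Real.div_rpow (by positivity) (by norm_num), Real.rpow_neg (by norm_num : (0:ℝ) ≤ 2)]
        field_simp
      rw [e1]
      rw [e3] at e2
      linarith [e2]
  refine ne_top_of_le_ne_top ?_ (ENNReal.tsum_le_tsum hb)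
  rw [ENNReal.tsum_mul_left]
  exact ENNReal.mul_ne_top ENNReal.ofReal_ne_top (sumZ2 hc)

lemma znorm_neg {d : ℕ} (k : Fin d → ℤ) : znorm (-k) = znorm k := by
  unfold znorm
  congr 1
  apply Finset.sum_congr rfl
  intro i _
  simp

lemma znorm_zero {d : ℕ} : znorm (0 : Fin d → ℤ) = 0 := by simp [znorm]

/-- Key convolution estimate. -/
lemma lemA {θ s : ℝ} (hs : 0 < s) (hsθ : s < θ) (hθ : θ < 1) (m : Fin 2 → ℤ) :
    (∑' k : Fin 2 → ℤ, (if k ≠ 0 then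
        ENNReal.ofReal (znorm k ^ (-(2*θ)) * znorm m ^ (2*θ) *
          (1 + znorm (m + k) ^ 2) ^ (-((2+2*θ-2*s)/2))) else 0))
    ≤ ENNReal.ofReal ((2:ℝ)^(2*θ)) *
        (∑' j : Fin 2 → ℤ, ENNReal.ofReal ((1 + znorm j ^ 2) ^ (-((2+2*θ-2*s)/2))))
      + ENNReal.ofReal ((4:ℝ)^((2+2*θ-2*s)/2)) *
        (∑' k : Fin 2 → ℤ, (if k ≠ 0 then ENNReal.ofReal (znorm k ^ (-(2+θ-s))) else 0)) := by
  have hB1 : (1:ℝ) ≤ (2+2*θ-2*s)/2 := by linarith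
  by_cases hm : m = 0
  · subst hm
    have hz : ∀ k : Fin 2 → ℤ, (if k ≠ 0 then
        ENNReal.ofReal (znorm k ^ (-(2*θ)) * znorm (0 : Fin 2 → ℤ) ^ (2*θ) *
          (1 + znorm ((0 : Fin 2 → ℤ) + k) ^ 2) ^ (-((2+2*θ-2*s)/2))) else 0) = 0 := by
      intro k
      rw [znorm_zero, Real.zero_rpow (by linarith : (0:ℝ) < 2*θ).ne']
      simp
    rw [tsum_congr hz]
    simp
  · have hM : 1 ≤ znorm m := one_le_znorm hm
    have hM0 : (0:ℝ) < znorm m := lt_of_lt_of_le one_pos hM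
    set B : ℝ := (2+2*θ-2*s)/2 with hBdef
    have hBpos : 0 < B := by linarith
    have hpt : ∀ k : Fin 2 → ℤ, (if k ≠ 0 then
        ENNReal.ofReal (znorm k ^ (-(2*θ)) * znorm m ^ (2*θ) *
          (1 + znorm (m + k) ^ 2) ^ (-B)) else 0)
        ≤ ENNReal.ofReal ((2:ℝ)^(2*θ)) * ENNReal.ofReal ((1 + znorm (m + k) ^ 2) ^ (-B))
          + ENNReal.ofReal ((4:ℝ)^B) *
            (if k ≠ 0 then ENNReal.ofReal (znorm k ^ (-(2+θ-s))) else 0) := by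
      intro k
      by_cases hk : k = 0
      · simp [hk]
      · simp only [hk, ne_eq, not_false_eq_true, if_true]
        have hzk : 0 < znorm k := znorm_pos hk
        have hTn : (0:ℝ) ≤ (1 + znorm (m + k) ^ 2) ^ (-B) := by
          apply Real.rpow_nonneg
          nlinarith [sq_nonneg (znorm (m+k))]
        by_cases hcase : znorm m / 2 ≤ znorm k
        · -- region 1
          refine le_trans ?_ (le_add_of_nonneg_right zero_le)
          rw [← ENNReal.ofReal_mul (by positivity)]
          apply ENNReal.ofReal_le_ofReal
          have h1 : znorm k ^ (-(2*θ)) ≤ (znorm m / 2) ^ (-(2*θ)) :=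
            Real.rpow_le_rpow_of_nonpos (by linarith) hcase (by linarith)
          have h2 : (znorm m / 2) ^ (-(2*θ)) = (2:ℝ)^(2*θ) * znorm m ^ (-(2*θ)) := by
            rw [Real.div_rpow hM0.le (by norm_num), Real.rpow_neg (by norm_num : (0:ℝ) ≤ 2)]
            field_simp
          have h3 : znorm m ^ (-(2*θ)) * znorm m ^ (2*θ) = 1 := by
            rw [← Real.rpow_add hM0]; norm_num
          calc znorm k ^ (-(2*θ)) * znorm m ^ (2*θ) * (1 + znorm (m + k) ^ 2) ^ (-B)
              ≤ ((2:ℝ)^(2*θ) * znorm m ^ (-(2*θ))) * znorm m ^ (2*θ) *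
                  (1 + znorm (m + k) ^ 2) ^ (-B) := by
                apply mul_le_mul_of_nonneg_right
                  (mul_le_mul_of_nonneg_right (h2 ▸ h1) (Real.rpow_nonneg hM0.le _)) hTn
            _ = (2:ℝ)^(2*θ) * (1 + znorm (m + k) ^ 2) ^ (-B) := by
                rw [mul_assoc ((2:ℝ)^(2*θ)), h3, mul_one]
        · -- region 2
          push_neg at hcase
          have hk2 : znorm k ≤ znorm m / 2 := hcase.le
          have htri : znorm m ≤ znorm (m + k) + znorm k := by
            have h := znorm_triangle (m + k) (-k)
            rw [znorm_neg] at h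
            simpa using h
          have hmk : znorm m / 2 ≤ znorm (m + k) := by linarith
          have h4 : (1 + znorm (m+k)^2) ^ (-B) ≤ (znorm m ^2 / 4 : ℝ) ^ (-B) := by
            apply Real.rpow_le_rpow_of_nonpos (by positivity) ?_ (by linarith)
            nlinarith [znorm_nonneg (m+k)]
          have h5 : (znorm m ^2 / 4 : ℝ) ^ (-B) = (4:ℝ)^B * (znorm m ^2 : ℝ)^(-B) := by
            rw [Real.div_rpow (by positivity) (by norm_num),
              Real.rpow_neg (by norm_num : (0:ℝ) ≤ 4)]
            field_simp
          have h6 : ((znorm m ^2 : ℝ))^(-B) = znorm m ^ (-(2*B)) := by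
            rw [← Real.rpow_natCast (znorm m) 2, ← Real.rpow_mul hM0.le]
            norm_num
          have h7 : znorm k ^ (-(2*θ)) = znorm k ^ (2-θ-s) * znorm k ^ (-(2+θ-s)) := by
            rw [← Real.rpow_add hzk]; congr 1; ring
          have h8 : znorm k ^ (2-θ-s) ≤ znorm m ^ (2-θ-s) :=
            Real.rpow_le_rpow (znorm_nonneg k) (by linarith) (by linarith)
          have h9 : znorm m ^ (2-θ-s) * znorm m ^ (2*θ) * znorm m ^ (-(2*B)) =
              znorm m ^ (s - θ) := by
            rw [← Real.rpow_add hM0, ← Real.rpow_add hM0]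
            congr 1
            rw [hBdef]; ring
          have h10 : znorm m ^ (s-θ) ≤ 1 :=
            Real.rpow_le_one_of_one_le_of_nonpos hM (by linarith)
          refine le_trans ?_ (le_add_of_nonneg_left zero_le)
          rw [← ENNReal.ofReal_mul (by positivity)]
          apply ENNReal.ofReal_le_ofReal
          have nn1 : (0:ℝ) ≤ znorm k ^ (-(2+θ-s)) := Real.rpow_nonneg hzk.le _
          have nn2 : (0:ℝ) ≤ znorm m ^ (2*θ) := Real.rpow_nonneg hM0.le _
          have nn3 : (0:ℝ) ≤ znorm m ^ (2-θ-s) := Real.rpow_nonneg hM0.le _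
          have nn4 : (0:ℝ) ≤ (4:ℝ)^B * znorm m ^ (-(2*B)) := by
            apply mul_nonneg (Real.rpow_nonneg (by norm_num) _) (Real.rpow_nonneg hM0.le _)
          calc znorm k ^ (-(2*θ)) * znorm m ^ (2*θ) * (1 + znorm (m + k) ^ 2) ^ (-B)
              ≤ (znorm m ^ (2-θ-s) * znorm k ^ (-(2+θ-s))) * znorm m ^ (2*θ) *
                  ((4:ℝ)^B * znorm m ^ (-(2*B))) := by
                apply mul_le_mul ?_ (by rw [h5, h6] at h4; exact h4) hTn
                · apply mul_nonneg (mul_nonneg nn3 nn1) nn2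
                · apply mul_le_mul_of_nonneg_right ?_ nn2
                  rw [h7]
                  exact mul_le_mul_of_nonneg_right h8 nn1
            _ = ((4:ℝ)^B * znorm k ^ (-(2+θ-s))) *
                  (znorm m ^ (2-θ-s) * znorm m ^ (2*θ) * znorm m ^ (-(2*B))) := by ring
            _ = ((4:ℝ)^B * znorm k ^ (-(2+θ-s))) * znorm m ^ (s-θ) := by rw [h9]
            _ ≤ ((4:ℝ)^B * znorm k ^ (-(2+θ-s))) * 1 := by
                apply mul_le_mul_of_nonneg_left h10
                apply mul_nonneg (Real.rpow_nonneg (by norm_num) _) nn1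
            _ = (4:ℝ)^B * znorm k ^ (-(2+θ-s)) := mul_one _
    calc (∑' k : Fin 2 → ℤ, (if k ≠ 0 then
        ENNReal.ofReal (znorm k ^ (-(2*θ)) * znorm m ^ (2*θ) *
          (1 + znorm (m + k) ^ 2) ^ (-B)) else 0))
        ≤ ∑' k : Fin 2 → ℤ,
            (ENNReal.ofReal ((2:ℝ)^(2*θ)) * ENNReal.ofReal ((1 + znorm (m + k) ^ 2) ^ (-B))
              + ENNReal.ofReal ((4:ℝ)^B) *
                (if k ≠ 0 then ENNReal.ofReal (znorm k ^ (-(2+θ-s))) else 0)) :=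
          ENNReal.tsum_le_tsum hpt
      _ = ENNReal.ofReal ((2:ℝ)^(2*θ)) *
            (∑' k : Fin 2 → ℤ, ENNReal.ofReal ((1 + znorm (m + k) ^ 2) ^ (-B)))
          + ENNReal.ofReal ((4:ℝ)^B) *
            (∑' k : Fin 2 → ℤ, (if k ≠ 0 then ENNReal.ofReal (znorm k ^ (-(2+θ-s))) else 0)) := by
          rw [ENNReal.tsum_add, ENNReal.tsum_mul_left, ENNReal.tsum_mul_left]
      _ = ENNReal.ofReal ((2:ℝ)^(2*θ)) *
            (∑' j : Fin 2 → ℤ, ENNReal.ofReal ((1 + znorm j ^ 2) ^ (-B)))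
          + ENNReal.ofReal ((4:ℝ)^B) *
            (∑' k : Fin 2 → ℤ, (if k ≠ 0 then ENNReal.ofReal (znorm k ^ (-(2+θ-s))) else 0)) := by
          congr 1
          congr 1
          have h := (Equiv.addLeft m).tsum_eq
            (fun j : Fin 2 → ℤ => ENNReal.ofReal ((1 + znorm j ^ 2) ^ (-B)))
          simp only [Equiv.coe_addLeft] at h
          exact h

/-! ### Fourier / Bessel part -/

lemma measurableSet_box : MeasurableSet (box 2) :=
  MeasurableSet.univ_pi fun _ => measurableSet_Ico

lemma measure_box2 : μT 2 Set.univ = 1 := by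
  rw [μT, Measure.restrict_apply_univ, box, volume_pi_pi]
  simp [Real.volume_Ico]

instance : IsProbabilityMeasure (μT 2) := ⟨measure_box2⟩

/-- The exponential character `e_k`. -/
def ch (k : Fin 2 → ℤ) : (Fin 2 → ℝ) → ℂ := fun x =>
  Complex.exp ((2 * (Real.pi : ℂ) * Complex.I) * ((∑ i, (k i : ℝ) * x i : ℝ) : ℂ))

lemma ch_continuous (k : Fin 2 → ℤ) : Continuous (ch k) := by
  apply Complex.continuous_exp.comp
  apply Continuous.mul continuous_const
  apply Complex.continuous_ofReal.comp
  exact continuous_finset_sum _ fun i _ => continuous_const.mul (continuous_apply i)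

lemma norm_ch (k : Fin 2 → ℤ) (x : Fin 2 → ℝ) : ‖ch k x‖ = 1 := by
  rw [ch, Complex.norm_exp]
  have : ((2 * (Real.pi : ℂ) * Complex.I) * ((∑ i, (k i : ℝ) * x i : ℝ) : ℂ)).re = 0 := by
    simp [Complex.mul_re]
  rw [this, Real.exp_zero]

lemma integral_char1d (m : ℤ) :
    (∫ t in Set.Ico (0:ℝ) 1,
        Complex.exp ((2 * (Real.pi : ℂ) * Complex.I) * (((m:ℝ) * t : ℝ) : ℂ)))
      = if m = 0 then 1 else 0 := by
  by_cases hm : m = 0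
  · subst hm
    simp only [Int.cast_zero, zero_mul, Complex.ofReal_zero, mul_zero, Complex.exp_zero]
    rw [setIntegral_const]
    simp [Real.volume_Ico]
  · rw [if_neg hm]
    have hrw : ∀ t : ℝ, ((2 * (Real.pi : ℂ) * Complex.I) * (((m:ℝ) * t : ℝ) : ℂ))
        = (2 * (Real.pi : ℂ) * Complex.I * (m:ℂ)) * (t:ℂ) := by
      intro t; push_cast; ring
    simp_rw [hrw]
    have hc : (2 * (Real.pi : ℂ) * Complex.I * (m:ℂ)) ≠ 0 := by
      simp [Real.pi_ne_zero, Complex.I_ne_zero, hm]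
    rw [MeasureTheory.integral_Ico_eq_integral_Ioo,
      ← MeasureTheory.integral_Ioc_eq_integral_Ioo,
      ← intervalIntegral.integral_of_le (by norm_num : (0:ℝ) ≤ 1),
      integral_exp_mul_complex hc]
    have h1 : Complex.exp (2 * (Real.pi : ℂ) * Complex.I * (m:ℂ) * ((1:ℝ):ℂ)) = 1 := by
      rw [Complex.ofReal_one, mul_one]
      have := Complex.exp_int_mul_two_pi_mul_I m
      rw [← this]
      congr 1
      ring
    have h0 : Complex.exp (2 * (Real.pi : ℂ) * Complex.I * (m:ℂ) * ((0:ℝ):ℂ)) = 1 := by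
      simp
    rw [h1, h0]
    simp

lemma integral_char (n : Fin 2 → ℤ) :
    (∫ x, ch n x ∂(μT 2)) = if n = 0 then 1 else 0 := by
  set g : Fin 2 → ℝ → ℂ := fun i t =>
    Complex.exp ((2 * (Real.pi : ℂ) * Complex.I) * (((n i : ℝ) * t : ℝ) : ℂ)) with hg
  have hfact : ∀ x : Fin 2 → ℝ, ch n x = ∏ i, g i (x i) := by
    intro x
    rw [ch, ← Complex.exp_sum]
    congr 1
    push_cast
    rw [Finset.mul_sum]
  have hind : ∀ x : Fin 2 → ℝ, (box 2).indicator (ch n) x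
      = ∏ i, (Set.Ico (0:ℝ) 1).indicator (g i) (x i) := by
    intro x
    by_cases hx : x ∈ box 2
    · rw [Set.indicator_of_mem hx, hfact]
      exact Finset.prod_congr rfl fun i _ =>
        (Set.indicator_of_mem (hx i (Set.mem_univ i)) _).symm
    · rw [Set.indicator_of_notMem hx]
      have : ∃ i, x i ∉ Set.Ico (0:ℝ) 1 := by
        by_contra h
        push_neg at h
        exact hx fun i _ => h i
      obtain ⟨i, hi⟩ := this
      exact (Finset.prod_eq_zero (Finset.mem_univ i)
        (Set.indicator_of_notMem hi _)).symm
  calc (∫ x, ch n x ∂(μT 2)) = ∫ x, (box 2).indicator (ch n) x := by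
        rw [μT, ← integral_indicator measurableSet_box]
    _ = ∫ x : Fin 2 → ℝ, ∏ i, (Set.Ico (0:ℝ) 1).indicator (g i) (x i) := by
        exact integral_congr_ae (Filter.Eventually.of_forall hind)
    _ = ∏ i, ∫ t, (Set.Ico (0:ℝ) 1).indicator (g i) t :=
        MeasureTheory.integral_fintype_prod_eq_prod
          (fun i => (Set.Ico (0:ℝ) 1).indicator (g i))
    _ = ∏ i, (if n i = 0 then (1:ℂ) else 0) := by
        apply Finset.prod_congr rfl
        intro i _
        rw [integral_indicator measurableSet_Ico]
        exact integral_char1d (n i)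
    _ = if n = 0 then 1 else 0 := by
        by_cases hn : n = 0
        · subst hn; simp
        · rw [if_neg hn]
          have : ∃ i, n i ≠ 0 := by
            by_contra h
            push_neg at h
            exact hn (funext h)
          obtain ⟨i, hi⟩ := this
          exact Finset.prod_eq_zero (Finset.mem_univ i) (if_neg hi)

lemma memLp_ch (k : Fin 2 → ℤ) : MemLp (ch k) 2 (μT 2) :=
  MemLp.of_bound (ch_continuous k).aestronglyMeasurable 1
    (Filter.Eventually.of_forall fun x => le_of_eq (norm_ch k x))

def chL (k : Fin 2 → ℤ) : Lp ℂ 2 (μT 2) := (memLp_ch k).toLp (ch k)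

lemma conj_ch_mul (k l : Fin 2 → ℤ) (x : Fin 2 → ℝ) :
    (starRingEnd ℂ) (ch k x) * ch l x = ch (l - k) x := by
  rw [ch, ch, ch, ← Complex.exp_conj, ← Complex.exp_add]
  congr 1
  rw [map_mul]
  have h1 : (starRingEnd ℂ) (2 * (Real.pi : ℂ) * Complex.I)
      = -(2 * (Real.pi : ℂ) * Complex.I) := by
    have h0 : (2 * (Real.pi:ℂ) * Complex.I) = (((2*Real.pi : ℝ)):ℂ) * Complex.I := by
      push_cast; ring
    rw [h0, map_mul, Complex.conj_ofReal, Complex.conj_I]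
    push_cast; ring
  rw [h1, Complex.conj_ofReal]
  have h2 : ((∑ i, ((l - k) i : ℝ) * x i : ℝ) : ℂ)
      = ((∑ i, (l i : ℝ) * x i : ℝ) : ℂ) - ((∑ i, (k i : ℝ) * x i : ℝ) : ℂ) := by
    push_cast
    rw [← Finset.sum_sub_distrib]
    congr 1
    funext i
    simp only [Pi.sub_apply]
    push_cast
    ring
  rw [h2]
  ring

lemma orthonormal_chL : Orthonormal ℂ chL := by
  rw [orthonormal_iff_ite]
  intro k l
  rw [MeasureTheory.L2.inner_def]
  have hae : ∀ᵐ x ∂(μT 2),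
      (inner ℂ (chL k x) (chL l x) : ℂ) = (starRingEnd ℂ) (ch k x) * ch l x := by
    filter_upwards [(memLp_ch k).coeFn_toLp, (memLp_ch l).coeFn_toLp] with x h1 h2
    rw [RCLike.inner_apply]
    rw [show (chL k : (Fin 2 → ℝ) → ℂ) x = ch k x from h1,
      show (chL l : (Fin 2 → ℝ) → ℂ) x = ch l x from h2]
    exact mul_comm _ _
  rw [integral_congr_ae hae]
  have : (∫ x, (starRingEnd ℂ) (ch k x) * ch l x ∂(μT 2)) = if l - k = 0 then 1 else 0 := by
    rw [← integral_char (l - k)]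
    exact integral_congr_ae (Filter.Eventually.of_forall fun x => conj_ch_mul k l x)
  rw [this]
  by_cases h : k = l
  · simp [h]
  · rw [if_neg h, if_neg (fun hlk => h (by
      have := sub_eq_zero.mp hlk
      exact this.symm))]

/-- Bessel's inequality for our Fourier coefficients. -/
lemma bessel (ξ : (Fin 2 → ℝ) → ℝ) (hmeas : Measurable ξ)
    (hL2 : eLpNorm ξ 2 (μT 2) < ∞) :
    (∑' m : Fin 2 → ℤ, (‖fc ξ m‖₊ : ℝ≥0∞) ^ 2) ≤ (eLpNorm ξ 2 (μT 2)) ^ 2 := by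
  set ξc : (Fin 2 → ℝ) → ℂ := fun x => (ξ x : ℂ) with hξc
  have hsn : eLpNorm ξc 2 (μT 2) = eLpNorm ξ 2 (μT 2) :=
    eLpNorm_congr_norm_ae (Filter.Eventually.of_forall fun x => by
      simp [hξc, Complex.norm_real])
  have hmem : MemLp ξc 2 (μT 2) := by
    constructor
    · exact (Complex.measurable_ofReal.comp hmeas).aestronglyMeasurable
    · rw [hsn]; exact hL2
  set xL : Lp ℂ 2 (μT 2) := hmem.toLp ξc with hxL
  have hinner : ∀ k : Fin 2 → ℤ, (inner ℂ (chL k) xL : ℂ) = fc ξ k := by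
    intro k
    rw [MeasureTheory.L2.inner_def]
    have hae : ∀ᵐ x ∂(μT 2),
        (inner ℂ (chL k x) (xL x) : ℂ)
          = (ξ x : ℂ) * Complex.exp (-(2 * (Real.pi : ℂ) * Complex.I) *
              ((∑ i, (k i : ℝ) * x i : ℝ) : ℂ)) := by
      filter_upwards [(memLp_ch k).coeFn_toLp, hmem.coeFn_toLp] with x h1 h2
      rw [RCLike.inner_apply]
      rw [show (chL k : (Fin 2 → ℝ) → ℂ) x = ch k x from h1,
        show (xL : (Fin 2 → ℝ) → ℂ) x = ξc x from h2]
      rw [ch, ← Complex.exp_conj]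
      rw [map_mul, Complex.conj_ofReal]
      have h3 : (starRingEnd ℂ) (2 * (Real.pi : ℂ) * Complex.I)
          = -(2 * (Real.pi : ℂ) * Complex.I) := by
        have h0 : (2 * (Real.pi:ℂ) * Complex.I) = (((2*Real.pi : ℝ)):ℂ) * Complex.I := by
          push_cast; ring
        rw [h0, map_mul, Complex.conj_ofReal, Complex.conj_I]
        push_cast; ring
      rw [h3, hξc]
    rw [integral_congr_ae hae, fc]
  have hnorm : ‖xL‖ = (eLpNorm ξ 2 (μT 2)).toReal := by
    rw [hxL, Lp.norm_toLp, hsn]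
  have key : ∀ s : Finset (Fin 2 → ℤ),
      (∑ m ∈ s, (‖fc ξ m‖₊ : ℝ≥0∞) ^ 2) ≤ (eLpNorm ξ 2 (μT 2)) ^ 2 := by
    intro s
    have hb : (∑ m ∈ s, ‖(inner ℂ (chL m) xL : ℂ)‖ ^ 2) ≤ ‖xL‖ ^ 2 :=
      orthonormal_chL.sum_inner_products_le xL
    have e1 : (∑ m ∈ s, (‖fc ξ m‖₊ : ℝ≥0∞) ^ 2)
        = ENNReal.ofReal (∑ m ∈ s, ‖fc ξ m‖ ^ 2) := by
      rw [ENNReal.ofReal_sum_of_nonneg fun m _ => by positivity]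
      apply Finset.sum_congr rfl
      intro m _
      rw [ENNReal.ofReal_pow (norm_nonneg _), ofReal_norm, enorm_eq_nnnorm]
    rw [e1]
    have e2 : (∑ m ∈ s, ‖fc ξ m‖ ^ 2) ≤ ‖xL‖ ^ 2 := by
      rw [show (∑ m ∈ s, ‖fc ξ m‖ ^ 2) = ∑ m ∈ s, ‖(inner ℂ (chL m) xL : ℂ)‖ ^ 2 from
        Finset.sum_congr rfl fun m _ => by rw [hinner m]]
      exact hb
    calc ENNReal.ofReal (∑ m ∈ s, ‖fc ξ m‖ ^ 2) ≤ ENNReal.ofReal (‖xL‖ ^ 2) :=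
          ENNReal.ofReal_le_ofReal e2
      _ = (eLpNorm ξ 2 (μT 2)) ^ 2 := by
          rw [hnorm, ENNReal.ofReal_pow ENNReal.toReal_nonneg,
            ENNReal.ofReal_toReal hL2.ne]
  rw [ENNReal.tsum_eq_iSup_sum]
  exact iSup_le key



/-- For `α ∈ (0,1)`, `β, ε > 0` with `β + ε < α` and
`δ ∈ (0, α−β−ε)` there is `C = C(α,β,ε,δ)` such that for every `n ≥ 1`, every
`ξ ∈ L²(𝕋²)` and every family `(a_k)` of unit vectors with `a_k ⊥ k`:
`Σ_{|k|>n} |k|^{−2α} Σ_l (1+|l|²)^{β+ε−2} |2π l·a_k|² |ξ̂(l−k)|² ≤ C n^{−2δ} ‖ξ‖²_{L²}`. -/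
theorem statement17 (α β ε δ : ℝ) (hα : α ∈ Set.Ioo (0:ℝ) 1) (hβ : 0 < β)
    (hε : 0 < ε) (hβε : β + ε < α) (hδ0 : 0 < δ) (hδ : δ < α - β - ε) :
    ∃ C : ℝ, 0 < C ∧
      ∀ n : ℕ, 1 ≤ n →
      ∀ ξ : (Fin 2 → ℝ) → ℝ, Measurable ξ → ZPeriodic ξ → spLp 2 ξ < ∞ →
      ∀ a : (Fin 2 → ℤ) → Fin 2 → ℝ,
        (∀ k : Fin 2 → ℤ, k ≠ 0 → ∑ i, (a k i) ^ 2 = 1) →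
        (∀ k : Fin 2 → ℤ, k ≠ 0 → ∑ i, a k i * (k i : ℝ) = 0) →
        (∑' k : Fin 2 → ℤ,
            if k ≠ 0 ∧ (n : ℝ) < znorm k then
              ENNReal.ofReal (znorm k ^ (-(2 * α))) *
                ∑' l : Fin 2 → ℤ,
                  ENNReal.ofReal
                      ((1 + znorm l ^ 2) ^ (β + ε - 2)
                        * ((2 * Real.pi) ^ 2 * (∑ i, (l i : ℝ) * a k i) ^ 2))
                    * (‖fc ξ (l - k)‖₊ : ℝ≥0∞) ^ 2
            else 0)
          ≤ ENNReal.ofReal (C * (n : ℝ) ^ (-(2 * δ))) * spLp 2 ξ ^ 2 := by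
  obtain ⟨hα0, hα1⟩ := hα
  set s : ℝ := β + ε with hsdef
  set θ : ℝ := α - δ with hθdef
  have hs : 0 < s := by rw [hsdef]; linarith
  have hsθ : s < θ := by rw [hsdef, hθdef]; linarith
  have hθ1 : θ < 1 := by rw [hθdef]; linarith
  have hθ0 : 0 < θ := lt_trans hs hsθ
  set Cb : ℝ≥0∞ :=
    ∑' j : Fin 2 → ℤ, ENNReal.ofReal ((1 + znorm j ^ 2) ^ (-((2+2*θ-2*s)/2))) with hCb
  set Cc : ℝ≥0∞ :=
    ∑' k : Fin 2 → ℤ, (if k ≠ 0 then ENNReal.ofReal (znorm k ^ (-(2+θ-s))) else 0) with hCc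
  set K : ℝ≥0∞ := ENNReal.ofReal ((2:ℝ)^(2*θ)) * Cb
    + ENNReal.ofReal ((4:ℝ)^((2+2*θ-2*s)/2)) * Cc with hK
  have hCbne : Cb ≠ ∞ := sumZ2 (by linarith)
  have hCcne : Cc ≠ ∞ := sumZ2' (by linarith)
  have hKne : K ≠ ∞ := by
    rw [hK]
    exact ENNReal.add_ne_top.mpr ⟨ENNReal.mul_ne_top ENNReal.ofReal_ne_top hCbne,
      ENNReal.mul_ne_top ENNReal.ofReal_ne_top hCcne⟩
  have hπ : (0:ℝ) < Real.pi := Real.pi_pos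
  have hKt : (0:ℝ) ≤ K.toReal := ENNReal.toReal_nonneg
  refine ⟨4 * Real.pi^2 * (K.toReal + 1), by nlinarith, ?_⟩
  intro n hn ξ hξm hξp hξL2 a ha hak
  have hn1 : (1:ℝ) ≤ (n:ℝ) := by exact_mod_cast hn
  have hn0 : (0:ℝ) < (n:ℝ) := by linarith
  -- the core real inequality
  have hfin : ∀ (k l : Fin 2 → ℤ), k ≠ 0 → (n:ℝ) < znorm k →
      znorm k ^ (-(2 * α)) *
        ((1 + znorm l ^ 2) ^ (β + ε - 2) *
          ((2 * Real.pi) ^ 2 * (∑ i, (l i : ℝ) * a k i) ^ 2))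
      ≤ ((n:ℝ) ^ (-(2*δ)) * (4*Real.pi^2)) *
          (znorm k ^ (-(2*θ)) * znorm (l - k) ^ (2*θ) *
            (1 + znorm l ^ 2) ^ (-((2+2*θ-2*s)/2))) := by
    intro k l hk hkn
    have hzk : 0 < znorm k := znorm_pos hk
    have hL : (0:ℝ) < 1 + znorm l ^ 2 := by nlinarith [sq_nonneg (znorm l)]
    set S : ℝ := ∑ i, (l i : ℝ) * a k i with hS
    have hS' : S = ∑ i, ((l - k) i : ℝ) * a k i := by
      have h1 : ∑ i, ((l - k) i : ℝ) * a k i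
          = (∑ i, (l i : ℝ) * a k i) - ∑ i, (k i : ℝ) * a k i := by
        rw [← Finset.sum_sub_distrib]
        apply Finset.sum_congr rfl
        intro i _
        simp only [Pi.sub_apply]
        push_cast
        ring
      have h0 : ∑ i, (k i : ℝ) * a k i = 0 := by
        rw [← hak k hk]
        exact Finset.sum_congr rfl fun i _ => mul_comm _ _
      rw [h1, h0, sub_zero, hS]
    have hCS1 : S^2 ≤ znorm (l - k) ^ 2 := by
      rw [hS']
      calc (∑ i, ((l - k) i : ℝ) * a k i)^2
          ≤ (∑ i, ((l - k) i : ℝ)^2) * (∑ i, (a k i)^2) :=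
            Finset.sum_mul_sq_le_sq_mul_sq _ _ _
        _ = znorm (l - k) ^ 2 := by rw [ha k hk, mul_one, znorm_sq]
    have hCS2 : S^2 ≤ 1 + znorm l ^ 2 := by
      have : S^2 ≤ znorm l ^ 2 := by
        rw [hS]
        calc (∑ i, (l i : ℝ) * a k i)^2
            ≤ (∑ i, (l i : ℝ)^2) * (∑ i, (a k i)^2) :=
              Finset.sum_mul_sq_le_sq_mul_sq _ _ _
          _ = znorm l ^ 2 := by rw [ha k hk, mul_one, znorm_sq]
      linarith
    have hSsplit : S^2 = (S^2)^θ * (S^2)^(1-θ) := by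
      rw [← Real.rpow_add' (sq_nonneg S) (by norm_num : θ + (1-θ) ≠ 0)]
      rw [show θ + (1-θ) = (1:ℝ) by ring, Real.rpow_one]
    have hq5 : (S^2)^θ ≤ znorm (l - k) ^ (2*θ) := by
      calc (S^2)^θ ≤ (znorm (l - k) ^ 2)^θ :=
            Real.rpow_le_rpow (sq_nonneg S) hCS1 hθ0.le
        _ = znorm (l - k) ^ (2*θ) := by
            rw [← Real.rpow_natCast (znorm (l - k)) 2, ← Real.rpow_mul (znorm_nonneg _)]
            norm_num
    have hq6 : (S^2)^(1-θ) ≤ (1 + znorm l ^ 2)^(1-θ) :=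
      Real.rpow_le_rpow (sq_nonneg S) hCS2 (by linarith)
    have hp2 : znorm k ^ (-(2*δ)) ≤ (n:ℝ) ^ (-(2*δ)) :=
      Real.rpow_le_rpow_of_nonpos hn0 hkn.le (by linarith)
    have hp1 : znorm k ^ (-(2*α)) = znorm k ^ (-(2*δ)) * znorm k ^ (-(2*θ)) := by
      rw [← Real.rpow_add hzk]
      congr 1
      rw [hθdef]; ring
    have hp4 : (1 + znorm l ^ 2)^(β+ε-2) * (1 + znorm l ^ 2)^(1-θ)
        = (1 + znorm l ^ 2)^(-((2+2*θ-2*s)/2)) := by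
      rw [← Real.rpow_add hL]
      congr 1
      rw [hsdef]; ring
    have key : znorm k ^ (-(2*δ)) * S^2
        ≤ (n:ℝ) ^ (-(2*δ)) * (znorm (l - k) ^ (2*θ) * (1 + znorm l ^ 2)^(1-θ)) := by
      calc znorm k ^ (-(2*δ)) * S^2
          = znorm k ^ (-(2*δ)) * ((S^2)^θ * (S^2)^(1-θ)) := by rw [← hSsplit]
        _ ≤ (n:ℝ) ^ (-(2*δ)) * (znorm (l - k) ^ (2*θ) * (1 + znorm l ^ 2)^(1-θ)) := by
            apply mul_le_mul hp2
              (mul_le_mul hq5 hq6 (Real.rpow_nonneg (sq_nonneg S) _)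
                (Real.rpow_nonneg (znorm_nonneg _) _))
              (mul_nonneg (Real.rpow_nonneg (sq_nonneg S) _)
                (Real.rpow_nonneg (sq_nonneg S) _))
              (Real.rpow_nonneg hn0.le _)
    rw [hp1, ← hp4]
    have rearr : znorm k ^ (-(2*δ)) * znorm k ^ (-(2*θ)) *
        ((1 + znorm l ^ 2) ^ (β + ε - 2) * ((2 * Real.pi) ^ 2 * S ^ 2))
        = (4*Real.pi^2) * (znorm k ^ (-(2*θ)) * (1 + znorm l ^ 2) ^ (β + ε - 2)) *
            (znorm k ^ (-(2*δ)) * S^2) := by ring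
    have rearr2 : ((n:ℝ) ^ (-(2*δ)) * (4*Real.pi^2)) *
        (znorm k ^ (-(2*θ)) * znorm (l - k) ^ (2*θ) *
          ((1 + znorm l ^ 2)^(β+ε-2) * (1 + znorm l ^ 2)^(1-θ)))
        = (4*Real.pi^2) * (znorm k ^ (-(2*θ)) * (1 + znorm l ^ 2) ^ (β + ε - 2)) *
            ((n:ℝ) ^ (-(2*δ)) * (znorm (l - k) ^ (2*θ) * (1 + znorm l ^ 2)^(1-θ))) := by ring
    rw [rearr, rearr2]
    apply mul_le_mul_of_nonneg_left key
    apply mul_nonneg (by positivity)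
    exact mul_nonneg (Real.rpow_nonneg (znorm_nonneg _) _) (Real.rpow_nonneg hL.le _)
  -- pointwise bound on each k-term
  have hterm : ∀ k : Fin 2 → ℤ,
      (if k ≠ 0 ∧ (n : ℝ) < znorm k then
        ENNReal.ofReal (znorm k ^ (-(2 * α))) *
          ∑' l : Fin 2 → ℤ,
            ENNReal.ofReal
                ((1 + znorm l ^ 2) ^ (β + ε - 2)
                  * ((2 * Real.pi) ^ 2 * (∑ i, (l i : ℝ) * a k i) ^ 2))
              * (‖fc ξ (l - k)‖₊ : ℝ≥0∞) ^ 2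
      else 0)
      ≤ ENNReal.ofReal ((n:ℝ) ^ (-(2*δ)) * (4*Real.pi^2)) *
          (if k ≠ 0 then
            ∑' m2 : Fin 2 → ℤ,
              ENNReal.ofReal (znorm k ^ (-(2*θ)) * znorm m2 ^ (2*θ) *
                  (1 + znorm (m2 + k) ^ 2) ^ (-((2+2*θ-2*s)/2)))
                * (‖fc ξ m2‖₊ : ℝ≥0∞) ^ 2
          else 0) := by
    intro k
    by_cases hcond : k ≠ 0 ∧ (n : ℝ) < znorm k
    · rw [if_pos hcond, if_pos hcond.1]
      obtain ⟨hk, hkn⟩ := hcond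
      have step2 : (∑' l : Fin 2 → ℤ,
            ENNReal.ofReal (znorm k ^ (-(2*θ)) * znorm (l - k) ^ (2*θ) *
                (1 + znorm l ^ 2) ^ (-((2+2*θ-2*s)/2)))
              * (‖fc ξ (l - k)‖₊ : ℝ≥0∞) ^ 2)
          = ∑' m2 : Fin 2 → ℤ,
              ENNReal.ofReal (znorm k ^ (-(2*θ)) * znorm m2 ^ (2*θ) *
                  (1 + znorm (m2 + k) ^ 2) ^ (-((2+2*θ-2*s)/2)))
                * (‖fc ξ m2‖₊ : ℝ≥0∞) ^ 2 := by
        have h := (Equiv.addRight k).tsum_eq (fun l : Fin 2 → ℤ =>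
          ENNReal.ofReal (znorm k ^ (-(2*θ)) * znorm (l - k) ^ (2*θ) *
              (1 + znorm l ^ 2) ^ (-((2+2*θ-2*s)/2)))
            * (‖fc ξ (l - k)‖₊ : ℝ≥0∞) ^ 2)
        simp only [Equiv.coe_addRight, add_sub_cancel_right] at h
        exact h.symm
      rw [← step2, ← ENNReal.tsum_mul_left, ← ENNReal.tsum_mul_left]
      apply ENNReal.tsum_le_tsum
      intro l
      calc ENNReal.ofReal (znorm k ^ (-(2 * α))) *
            (ENNReal.ofReal
                ((1 + znorm l ^ 2) ^ (β + ε - 2)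
                  * ((2 * Real.pi) ^ 2 * (∑ i, (l i : ℝ) * a k i) ^ 2))
              * (‖fc ξ (l - k)‖₊ : ℝ≥0∞) ^ 2)
          = ENNReal.ofReal (znorm k ^ (-(2 * α)) *
              ((1 + znorm l ^ 2) ^ (β + ε - 2)
                * ((2 * Real.pi) ^ 2 * (∑ i, (l i : ℝ) * a k i) ^ 2)))
              * (‖fc ξ (l - k)‖₊ : ℝ≥0∞) ^ 2 := by
            rw [ENNReal.ofReal_mul (Real.rpow_nonneg (znorm_nonneg _) _), mul_assoc]
        _ ≤ ENNReal.ofReal (((n:ℝ) ^ (-(2*δ)) * (4*Real.pi^2)) *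
              (znorm k ^ (-(2*θ)) * znorm (l - k) ^ (2*θ) *
                (1 + znorm l ^ 2) ^ (-((2+2*θ-2*s)/2))))
              * (‖fc ξ (l - k)‖₊ : ℝ≥0∞) ^ 2 :=
            mul_le_mul_left (ENNReal.ofReal_le_ofReal (hfin k l hk hkn)) _
        _ = ENNReal.ofReal ((n:ℝ) ^ (-(2*δ)) * (4*Real.pi^2)) *
            (ENNReal.ofReal (znorm k ^ (-(2*θ)) * znorm (l - k) ^ (2*θ) *
                (1 + znorm l ^ 2) ^ (-((2+2*θ-2*s)/2)))
              * (‖fc ξ (l - k)‖₊ : ℝ≥0∞) ^ 2) := by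
            rw [ENNReal.ofReal_mul (by positivity), mul_assoc]
    · rw [if_neg hcond]
      exact zero_le
  refine le_trans (ENNReal.tsum_le_tsum hterm) ?_
  rw [ENNReal.tsum_mul_left]
  have hmid : (∑' k : Fin 2 → ℤ, (if k ≠ 0 then
        ∑' m2 : Fin 2 → ℤ,
          ENNReal.ofReal (znorm k ^ (-(2*θ)) * znorm m2 ^ (2*θ) *
              (1 + znorm (m2 + k) ^ 2) ^ (-((2+2*θ-2*s)/2)))
            * (‖fc ξ m2‖₊ : ℝ≥0∞) ^ 2
      else 0)) ≤ K * spLp 2 ξ ^ 2 := by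
    have e1 : ∀ k : Fin 2 → ℤ, (if k ≠ 0 then
          ∑' m2 : Fin 2 → ℤ,
            ENNReal.ofReal (znorm k ^ (-(2*θ)) * znorm m2 ^ (2*θ) *
                (1 + znorm (m2 + k) ^ 2) ^ (-((2+2*θ-2*s)/2)))
              * (‖fc ξ m2‖₊ : ℝ≥0∞) ^ 2
        else 0)
        = ∑' m2 : Fin 2 → ℤ,
            (if k ≠ 0 then ENNReal.ofReal (znorm k ^ (-(2*θ)) * znorm m2 ^ (2*θ) *
                (1 + znorm (m2 + k) ^ 2) ^ (-((2+2*θ-2*s)/2))) else 0)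
              * (‖fc ξ m2‖₊ : ℝ≥0∞) ^ 2 := by
      intro k
      by_cases hk : k = 0
      · simp [hk]
      · simp only [hk, ne_eq, not_false_eq_true, if_true]
    rw [tsum_congr e1, ENNReal.tsum_comm]
    have e2 : ∀ m2 : Fin 2 → ℤ, (∑' k : Fin 2 → ℤ,
          (if k ≠ 0 then ENNReal.ofReal (znorm k ^ (-(2*θ)) * znorm m2 ^ (2*θ) *
              (1 + znorm (m2 + k) ^ 2) ^ (-((2+2*θ-2*s)/2))) else 0)
            * (‖fc ξ m2‖₊ : ℝ≥0∞) ^ 2)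
        = (∑' k : Fin 2 → ℤ,
            (if k ≠ 0 then ENNReal.ofReal (znorm k ^ (-(2*θ)) * znorm m2 ^ (2*θ) *
                (1 + znorm (m2 + k) ^ 2) ^ (-((2+2*θ-2*s)/2))) else 0))
            * (‖fc ξ m2‖₊ : ℝ≥0∞) ^ 2 := fun m2 => ENNReal.tsum_mul_right
    rw [tsum_congr e2]
    calc (∑' m2 : Fin 2 → ℤ, (∑' k : Fin 2 → ℤ,
            (if k ≠ 0 then ENNReal.ofReal (znorm k ^ (-(2*θ)) * znorm m2 ^ (2*θ) *
                (1 + znorm (m2 + k) ^ 2) ^ (-((2+2*θ-2*s)/2))) else 0))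
            * (‖fc ξ m2‖₊ : ℝ≥0∞) ^ 2)
        ≤ ∑' m2 : Fin 2 → ℤ, K * (‖fc ξ m2‖₊ : ℝ≥0∞) ^ 2 :=
          ENNReal.tsum_le_tsum fun m2 =>
            mul_le_mul_left (lemA hs hsθ hθ1 m2) _
      _ = K * ∑' m2 : Fin 2 → ℤ, (‖fc ξ m2‖₊ : ℝ≥0∞) ^ 2 := ENNReal.tsum_mul_left
      _ ≤ K * spLp 2 ξ ^ 2 := by
          apply mul_le_mul_right
          exact bessel ξ hξm hξL2
  calc ENNReal.ofReal ((n:ℝ) ^ (-(2*δ)) * (4*Real.pi^2)) *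
        (∑' k : Fin 2 → ℤ, (if k ≠ 0 then
          ∑' m2 : Fin 2 → ℤ,
            ENNReal.ofReal (znorm k ^ (-(2*θ)) * znorm m2 ^ (2*θ) *
                (1 + znorm (m2 + k) ^ 2) ^ (-((2+2*θ-2*s)/2)))
              * (‖fc ξ m2‖₊ : ℝ≥0∞) ^ 2
        else 0))
      ≤ ENNReal.ofReal ((n:ℝ) ^ (-(2*δ)) * (4*Real.pi^2)) * (K * spLp 2 ξ ^ 2) :=
        mul_le_mul_right hmid _
    _ ≤ ENNReal.ofReal (4 * Real.pi^2 * (K.toReal + 1) * (n:ℝ) ^ (-(2 * δ))) * spLp 2 ξ ^ 2 := by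
        rw [← mul_assoc]
        apply mul_le_mul_left
        calc ENNReal.ofReal ((n:ℝ) ^ (-(2*δ)) * (4*Real.pi^2)) * K
            ≤ ENNReal.ofReal ((n:ℝ) ^ (-(2*δ)) * (4*Real.pi^2)) *
                ENNReal.ofReal (K.toReal + 1) := by
              apply mul_le_mul_right
              calc K = ENNReal.ofReal K.toReal := (ENNReal.ofReal_toReal hKne).symm
                _ ≤ ENNReal.ofReal (K.toReal + 1) := ENNReal.ofReal_le_ofReal (by linarith)
          _ = ENNReal.ofReal (4 * Real.pi^2 * (K.toReal + 1) * (n:ℝ) ^ (-(2 * δ))) := by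
              rw [← ENNReal.ofReal_mul (by positivity)]
              congr 1
              ring


end GaleatiLuo
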